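/- (RKHS-norm-free simple regret of MVR with rescaled noise parameter.) Fix B > 0, c > 0, ρ ≥ 0, w ≥ 0 and T ∈ ℕ+. Set λ := √c / B and β^{1/2} := B + (ρ/λ)·w. Let x_1,…,x_T ∈ 𝒳 be chosen by maximum variance reduction with noise level λ²: for every t ∈ [T] and x ∈ 𝒳, σ_{λ²I_{t−1}}(x; X_{t−1}) ≤ σ_{λ²I_{t−1}}(x_t; X_{t−1}). Suppose γ ≥ 0 satisfies I_{λ²I_T}(Z) ≤ γ for every T-tuple Z of points of 𝒳, and T/2 ≥ 3γ. Let y ∈ ℝ^T and f : 𝒳 → ℝ satisfy |f(x) − μ_{λ²I_T}(x; X_T, y)| ≤ β^{1/2}·σ_{λ²I_T}(x; X_T) for all x ∈ 𝒳, and let x̂ ∈ 𝒳 satisfy μ_{λ²I_T}(x; X_T, y) ≤ μ_{λ²I_T}(x̂; X_T, y) for all x ∈ 𝒳. Then for every x* ∈ 𝒳: f(x*) − f(x̂) ≤ 8·(√c + ρ·w)·√(γ/T); in particular the bound does not depend on B. -/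

import Mathlib

open Matrix Real Finset

noncomputable section

universe u

/-- Gram (kernel) matrix of a finite tuple of points. -/
def gramMat {𝒳 : Type u} (k : 𝒳 → 𝒳 → ℝ) {m : ℕ} (X : Fin m → 𝒳) :
    Matrix (Fin m) (Fin m) ℝ :=
  Matrix.of fun i j => k (X i) (X j)

/-- Kernel vector `k(x, X)`. -/
def kVec {𝒳 : Type u} (k : 𝒳 → 𝒳 → ℝ) {m : ℕ} (X : Fin m → 𝒳) (x : 𝒳) : Fin m → ℝ :=
  fun i => k x (X i)

/-- Posterior variance `σ²_Σ(x; X)`. -/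
def postVar {𝒳 : Type u} (k : 𝒳 → 𝒳 → ℝ) {m : ℕ} (S : Matrix (Fin m) (Fin m) ℝ)
    (X : Fin m → 𝒳) (x : 𝒳) : ℝ :=
  k x x - kVec k X x ⬝ᵥ ((gramMat k X + S)⁻¹ *ᵥ kVec k X x)

/-- Posterior standard deviation `σ_Σ(x; X)`. -/
def postStd {𝒳 : Type u} (k : 𝒳 → 𝒳 → ℝ) {m : ℕ} (S : Matrix (Fin m) (Fin m) ℝ)
    (X : Fin m → 𝒳) (x : 𝒳) : ℝ :=
  Real.sqrt (postVar k S X x)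

/-- Posterior mean `μ_Σ(x; X, y)`. -/
def postMean {𝒳 : Type u} (k : 𝒳 → 𝒳 → ℝ) {m : ℕ} (S : Matrix (Fin m) (Fin m) ℝ)
    (X : Fin m → 𝒳) (y : Fin m → ℝ) (x : 𝒳) : ℝ :=
  kVec k X x ⬝ᵥ ((gramMat k X + S)⁻¹ *ᵥ y)

/-- Information gain `I_Σ(Z)`. -/
def infoGain {𝒳 : Type u} (k : 𝒳 → 𝒳 → ℝ) {m : ℕ} (S : Matrix (Fin m) (Fin m) ℝ)
    (Z : Fin m → 𝒳) : ℝ :=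
  (1 / 2) * Real.log ((S + gramMat k Z).det / S.det)

/-- `k` is a symmetric positive semidefinite kernel. -/
def IsKernel {𝒳 : Type u} (k : 𝒳 → 𝒳 → ℝ) : Prop :=
  (∀ x y, k x y = k y x) ∧ ∀ (m : ℕ) (Z : Fin m → 𝒳), (gramMat k Z).PosSemidef

/-- Prefix of length `t` of a sequence of points. -/
def preT {𝒳 : Type u} (x : ℕ → 𝒳) (t : ℕ) : Fin t → 𝒳 := fun i => x i.val

/-!
Posterior variances only decrease when data are added, so under maximum variance reduction every
final variance `σ²_T(x)` is at most `V := σ²_{T-1}(x_T)`, and `V` is at most every earlier query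
variance `σ²_{t-1}(x_t)`. The Schur-complement recursion
`det (K_T + λ² I) = ∏ₜ (σ²_{t-1}(x_t) + λ²)` turns the information gain into
`½ ∑ₜ log (1 + σ²_{t-1}(x_t) / λ²) ≥ (T / 2) log (1 + V / λ²)`, whence `V ≤ 3 λ² γ / T` once
`γ / T ≤ 1 / 6`. The confidence bound and the choice of `x̂` bound the regret by
`2 β^{1/2} max σ_T ≤ 4 β^{1/2} λ √(γ / T)`, and `β^{1/2} λ = √c + ρ w` does not involve `B`.
-/

open Function

namespace Matrix

variable {ι κ : Type*} [Fintype ι] [Fintype κ]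

lemma extend_zero_dotProduct {e : ι → κ} (he : Injective e) (α : ι → ℝ) (g : κ → ℝ) :
    extend e α 0 ⬝ᵥ g = α ⬝ᵥ (g ∘ e) := by
  refine (Fintype.sum_of_injective e he _ _ (fun i hi => ?_) fun j => ?_).symm
  · rw [extend_apply' _ _ _ (by simpa using hi), Pi.zero_apply, zero_mul]
  · rw [he.extend_apply, Function.comp_apply]

lemma mulVec_extend_zero_comp {e : ι → κ} (he : Injective e) (M : Matrix κ κ ℝ) (α : ι → ℝ) :
    (M *ᵥ extend e α 0) ∘ e = M.submatrix e e *ᵥ α := by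
  ext j
  change M (e j) ⬝ᵥ extend e α 0 = (M (e j) ∘ e) ⬝ᵥ α
  rw [dotProduct_comm, extend_zero_dotProduct he, dotProduct_comm]

lemma replicateCol_conjTranspose_mul_mul_replicateCol (A : Matrix ι ι ℝ) (v : ι → ℝ) :
    (replicateCol (Fin 1) v)ᴴ * A * replicateCol (Fin 1) v = of fun _ _ => v ⬝ᵥ (A *ᵥ v) := by
  ext i j
  rw [conjTranspose_replicateCol, star_trivial, ← replicateRow_vecMul,
    replicateRow_mul_replicateCol_apply, of_apply, dotProduct_mulVec]

variable [DecidableEq ι] [DecidableEq κ]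

lemma PosDef.mulVec_inv_mulVec {M : Matrix ι ι ℝ} (hM : M.PosDef) (v : ι → ℝ) :
    M *ᵥ (M⁻¹ *ᵥ v) = v := by
  rw [mulVec_mulVec, mul_nonsing_inv _ hM.det_pos.ne'.isUnit, one_mulVec]

/-- Equality holds at `α = M⁻¹ *ᵥ v`. -/
lemma PosDef.two_mul_dotProduct_sub_le_dotProduct_inv_mulVec {M : Matrix ι ι ℝ} (hM : M.PosDef)
    (v α : ι → ℝ) : 2 * (α ⬝ᵥ v) - α ⬝ᵥ (M *ᵥ α) ≤ v ⬝ᵥ (M⁻¹ *ᵥ v) := by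
  set w := M⁻¹ *ᵥ v
  have hMw : M *ᵥ w = v := hM.mulVec_inv_mulVec v
  have hsymm : w ⬝ᵥ (M *ᵥ α) = v ⬝ᵥ α := by
    rw [dotProduct_mulVec, ← mulVec_transpose, ← conjTranspose_eq_transpose_of_trivial,
      hM.isHermitian.eq, hMw]
  have hnonneg := hM.posSemidef.dotProduct_mulVec_nonneg (α - w)
  rw [star_trivial, mulVec_sub, hMw, sub_dotProduct, dotProduct_sub, dotProduct_sub, hsymm,
    dotProduct_comm w v] at hnonneg
  linarith [dotProduct_comm α v]

lemma PosDef.dotProduct_inv_mulVec_submatrix_le {M : Matrix κ κ ℝ} (hM : M.PosDef) {e : ι → κ}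
    (he : Injective e) (v : κ → ℝ) :
    (v ∘ e) ⬝ᵥ ((M.submatrix e e)⁻¹ *ᵥ (v ∘ e)) ≤ v ⬝ᵥ (M⁻¹ *ᵥ v) := by
  set α := (M.submatrix e e)⁻¹ *ᵥ (v ∘ e)
  have hα : (M.submatrix e e) *ᵥ α = v ∘ e := (hM.submatrix he).mulVec_inv_mulVec _
  have key := hM.two_mul_dotProduct_sub_le_dotProduct_inv_mulVec v (extend e α 0)
  rwa [extend_zero_dotProduct he, extend_zero_dotProduct he, mulVec_extend_zero_comp he, hα,
    two_mul, add_sub_cancel_right, dotProduct_comm] at key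

end Matrix

lemma le_three_halves_mul_of_log_one_add_le {u s : ℝ} (hu : 0 ≤ u) (hs : s ≤ 1 / 3)
    (h : Real.log (1 + u) ≤ s) : u ≤ 3 / 2 * s := by
  have hpos : 0 < 1 + u := by linarith
  have hle := mul_le_mul_of_nonneg_right ((Real.one_sub_inv_le_log_of_pos hpos).trans h) hpos.le
  rw [sub_mul, inv_mul_cancel₀ hpos.ne', one_mul] at hle
  nlinarith [mul_nonneg hu (sub_nonneg.mpr hs)]

lemma sub_le_two_mul_of_abs_sub_le {α : Type*} {f μ σ : α → ℝ} {β b : ℝ} (hβ : 0 ≤ β)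
    (hconf : ∀ x, |f x - μ x| ≤ β * σ x) (hσ : ∀ x, σ x ≤ b) {xhat : α}
    (hxhat : ∀ x, μ x ≤ μ xhat) (xstar : α) : f xstar - f xhat ≤ 2 * β * b := by
  have hstar := (abs_le.mp (hconf xstar)).2
  have hhat := (abs_le.mp (hconf xhat)).1
  have hσstar := mul_le_mul_of_nonneg_left (hσ xstar) hβ
  have hσhat := mul_le_mul_of_nonneg_left (hσ xhat) hβ
  linarith [hxhat xstar]

section Kernel

variable {𝒳 : Type u} {k : 𝒳 → 𝒳 → ℝ}

lemma IsKernel.posDef_gramMat_add_smul_one (hk : IsKernel k) {m : ℕ} (X : Fin m → 𝒳) {l : ℝ}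
    (hl : 0 < l) : (gramMat k X + l • (1 : Matrix (Fin m) (Fin m) ℝ)).PosDef :=
  PosDef.posSemidef_add (hk.2 m X) (PosDef.one.smul hl)

lemma gramMat_snoc_submatrix (hsymm : ∀ x y, k x y = k y x) {m : ℕ} (X : Fin m → 𝒳) (x : 𝒳) :
    (gramMat k (Fin.snoc X x : Fin (m + 1) → 𝒳)).submatrix finSumFinEquiv finSumFinEquiv =
      fromBlocks (gramMat k X) (replicateCol (Fin 1) (kVec k X x))
        (replicateCol (Fin 1) (kVec k X x))ᴴ (of fun _ _ => k x x) := by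
  ext (i | i) (j | j) <;> simp [gramMat, kVec, hsymm x, Fin.snoc, Fin.fin_one_eq_zero]

lemma postVar_eq_schur_complement {m : ℕ} (S : Matrix (Fin m) (Fin m) ℝ) (X : Fin m → 𝒳)
    (x : 𝒳) (d : ℝ) :
    (of fun _ _ => k x x + d : Matrix (Fin 1) (Fin 1) ℝ) - (replicateCol (Fin 1) (kVec k X x))ᴴ *
        (gramMat k X + S)⁻¹ * replicateCol (Fin 1) (kVec k X x) =
      of fun _ _ => postVar k S X x + d := by
  rw [replicateCol_conjTranspose_mul_mul_replicateCol, postVar]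
  ext
  simp only [Matrix.sub_apply, of_apply]
  ring

lemma IsKernel.postVar_nonneg (hk : IsKernel k) {m : ℕ} (X : Fin m → 𝒳) {l : ℝ} (hl : 0 < l)
    (x : 𝒳) : 0 ≤ postVar k (l • (1 : Matrix (Fin m) (Fin m) ℝ)) X x := by
  have hA := hk.posDef_gramMat_add_smul_one X hl
  let := hA.isUnit.invertible
  have hblock : (fromBlocks (gramMat k X + l • 1) (replicateCol (Fin 1) (kVec k X x))
      (replicateCol (Fin 1) (kVec k X x))ᴴ (of fun _ _ => k x x + 0)).PosSemidef := by
    have hdiag : (fromBlocks (l • 1 : Matrix (Fin m) (Fin m) ℝ) 0 0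
        (0 : Matrix (Fin 1) (Fin 1) ℝ)).PosSemidef := by
      rw [smul_one_eq_diagonal, ← diagonal_zero, fromBlocks_diagonal]
      exact PosSemidef.diagonal fun i => by cases i <;> simp [hl.le]
    convert ((hk.2 (m + 1) (Fin.snoc X x)).submatrix finSumFinEquiv).add hdiag using 1
    rw [gramMat_snoc_submatrix hk.1, fromBlocks_add]
    simp
  have := ((PosDef.fromBlocks₁₁ _ _ hA).mp hblock).diag_nonneg (i := 0)
  rwa [postVar_eq_schur_complement, of_apply, add_zero] at this

lemma IsKernel.det_gramMat_snoc_add_smul_one (hk : IsKernel k) {m : ℕ} (X : Fin m → 𝒳) {l : ℝ}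
    (hl : 0 < l) (x : 𝒳) :
    (gramMat k (Fin.snoc X x : Fin (m + 1) → 𝒳) +
        l • (1 : Matrix (Fin (m + 1)) (Fin (m + 1)) ℝ)).det =
      (gramMat k X + l • (1 : Matrix (Fin m) (Fin m) ℝ)).det *
        (postVar k (l • (1 : Matrix (Fin m) (Fin m) ℝ)) X x + l) := by
  let := (hk.posDef_gramMat_add_smul_one X hl).isUnit.invertible
  have hcorner : (of fun _ _ => k x x) + l • (1 : Matrix (Fin 1) (Fin 1) ℝ) =
      of fun _ _ => k x x + l := by
    ext i j
    simp [Subsingleton.elim i j]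
  rw [← det_submatrix_equiv_self finSumFinEquiv]
  simp only [submatrix_add, submatrix_smul, Pi.add_apply, Pi.smul_apply]
  rw [gramMat_snoc_submatrix hk.1, submatrix_one_equiv, ← fromBlocks_one, fromBlocks_smul,
    fromBlocks_add, det_fromBlocks₁₁, invOf_eq_nonsing_inv]
  simp only [smul_zero, add_zero]
  rw [hcorner, postVar_eq_schur_complement, det_fin_one, of_apply]

lemma IsKernel.postVar_le_postVar_comp (hk : IsKernel k) {m n : ℕ} (X : Fin m → 𝒳)
    {e : Fin n → Fin m} (he : Injective e) {l : ℝ} (hl : 0 < l) (x : 𝒳) :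
    postVar k (l • (1 : Matrix (Fin m) (Fin m) ℝ)) X x ≤
      postVar k (l • (1 : Matrix (Fin n) (Fin n) ℝ)) (X ∘ e) x := by
  have := (hk.posDef_gramMat_add_smul_one X hl).dotProduct_inv_mulVec_submatrix_le he (kVec k X x)
  simp only [submatrix_add, submatrix_smul, Pi.add_apply, Pi.smul_apply, submatrix_one e he]
    at this
  exact sub_le_sub_left this _

lemma preT_succ (xs : ℕ → 𝒳) (t : ℕ) : preT xs (t + 1) = Fin.snoc (preT xs t) (xs t) := by
  ext i
  refine Fin.lastCases ?_ (fun j => ?_) i <;> simp [preT]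

lemma IsKernel.postStd_le_postStd_iff (hk : IsKernel k) {m : ℕ} (X : Fin m → 𝒳) {l : ℝ}
    (hl : 0 < l) (x y : 𝒳) :
    postStd k (l • (1 : Matrix (Fin m) (Fin m) ℝ)) X x ≤
        postStd k (l • (1 : Matrix (Fin m) (Fin m) ℝ)) X y ↔
      postVar k (l • (1 : Matrix (Fin m) (Fin m) ℝ)) X x ≤
        postVar k (l • (1 : Matrix (Fin m) (Fin m) ℝ)) X y :=
  Real.sqrt_le_sqrt_iff (hk.postVar_nonneg X hl y)

lemma IsKernel.det_gramMat_preT_add_smul_one (hk : IsKernel k) (xs : ℕ → 𝒳) {l : ℝ} (hl : 0 < l)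
    (T : ℕ) :
    (gramMat k (preT xs T) + l • (1 : Matrix (Fin T) (Fin T) ℝ)).det =
      ∏ t ∈ range T, (postVar k (l • (1 : Matrix (Fin t) (Fin t) ℝ)) (preT xs t) (xs t) + l) := by
  induction T with
  | zero => simp
  | succ n ih => rw [prod_range_succ, ← ih, preT_succ, hk.det_gramMat_snoc_add_smul_one _ hl]

lemma IsKernel.infoGain_preT_eq_sum_log (hk : IsKernel k) (xs : ℕ → 𝒳) {l : ℝ} (hl : 0 < l)
    (T : ℕ) :
    infoGain k (l • (1 : Matrix (Fin T) (Fin T) ℝ)) (preT xs T) =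
      (1 / 2) * ∑ t ∈ range T,
        Real.log (1 + postVar k (l • (1 : Matrix (Fin t) (Fin t) ℝ)) (preT xs t) (xs t) / l) := by
  have hpow : l ^ T = ∏ _t ∈ range T, l := by simp
  rw [infoGain, add_comm, hk.det_gramMat_preT_add_smul_one xs hl, det_smul, det_one,
    Fintype.card_fin, mul_one, hpow, ← prod_div_distrib, Real.log_prod]
  · congr 1
    refine sum_congr rfl fun t _ => ?_
    rw [add_div, div_self hl.ne', add_comm]
  · intro t _
    have := hk.postVar_nonneg (preT xs t) hl (xs t)
    positivity

lemma IsKernel.postVar_preT_le_of_mvr (hk : IsKernel k) (xs : ℕ → 𝒳) {l : ℝ} (hl : 0 < l)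
    {T : ℕ} (hT : 0 < T)
    (hMVR : ∀ t < T, ∀ x : 𝒳,
      postVar k (l • (1 : Matrix (Fin t) (Fin t) ℝ)) (preT xs t) x ≤
        postVar k (l • (1 : Matrix (Fin t) (Fin t) ℝ)) (preT xs t) (xs t))
    {γ : ℝ} (hγ : infoGain k (l • (1 : Matrix (Fin T) (Fin T) ℝ)) (preT xs T) ≤ γ)
    (hbig : 3 * γ ≤ T / 2) (x : 𝒳) :
    postVar k (l • (1 : Matrix (Fin T) (Fin T) ℝ)) (preT xs T) x ≤ 3 * l * γ / T := by
  obtain ⟨n, rfl⟩ := Nat.exists_eq_add_one.mpr hT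
  set V := postVar k (l • (1 : Matrix (Fin n) (Fin n) ℝ)) (preT xs n) (xs n)
  have hV : 0 ≤ V := hk.postVar_nonneg _ hl _
  have hlast : postVar k (l • 1) (preT xs (n + 1)) x ≤ V :=
    (hk.postVar_le_postVar_comp (preT xs (n + 1)) (Fin.castLE_injective n.le_succ) hl x).trans
      (hMVR n n.lt_succ_self x)
  have hearlier : ∀ t ∈ range (n + 1),
      V ≤ postVar k (l • (1 : Matrix (Fin t) (Fin t) ℝ)) (preT xs t) (xs t) := fun t ht =>
    (hk.postVar_le_postVar_comp (preT xs n) (Fin.castLE_injective (mem_range_succ_iff.mp ht))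
      hl (xs n)).trans (hMVR t (mem_range.mp ht) (xs n))
  have hsum : ((n + 1 : ℕ) : ℝ) * Real.log (1 + V / l) ≤ 2 * γ := by
    calc ((n + 1 : ℕ) : ℝ) * Real.log (1 + V / l)
          = ∑ _t ∈ range (n + 1), Real.log (1 + V / l) := by simp
      _ ≤ ∑ t ∈ range (n + 1),
          Real.log (1 + postVar k (l • (1 : Matrix (Fin t) (Fin t) ℝ)) (preT xs t) (xs t) / l) :=
        sum_le_sum fun t ht => Real.log_le_log (by positivity) (by gcongr; exact hearlier t ht)
      _ ≤ 2 * γ := by rw [hk.infoGain_preT_eq_sum_log xs hl] at hγ; linarith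
  have hn : (0 : ℝ) < ((n + 1 : ℕ) : ℝ) := by positivity
  have hratio : V / l ≤ 3 / 2 * (2 * γ / (n + 1 : ℕ)) :=
    le_three_halves_mul_of_log_one_add_le (by positivity)
      (by rw [div_le_iff₀ hn]; linarith) (by rw [le_div_iff₀ hn]; linarith)
  calc postVar k (l • 1) (preT xs (n + 1)) x ≤ l * (V / l) := by rwa [mul_div_cancel₀ _ hl.ne']
    _ ≤ l * (3 / 2 * (2 * γ / (n + 1 : ℕ))) := by gcongr
    _ = 3 * l * γ / (n + 1 : ℕ) := by ring

end Kernel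

/-- RKHS-norm-free simple regret of MVR with rescaled noise
parameter `λ = √c / B`; the bound does not depend on `B`. -/
theorem mvr_simple_regret_rkhs_norm_free
    {𝒳 : Type u} (k : 𝒳 → 𝒳 → ℝ) (hk : IsKernel k)
    (B c ρ w : ℝ) (hB : 0 < B) (hc : 0 < c) (hρ : 0 ≤ ρ) (hw : 0 ≤ w)
    (T : ℕ) (hT : 0 < T)
    (lam : ℝ) (hlam : lam = Real.sqrt c / B)
    (sβ : ℝ) (hsβ : sβ = B + (ρ / lam) * w)
    (xs : ℕ → 𝒳)
    (hMVR : ∀ t < T, ∀ x : 𝒳,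
      postStd k ((lam ^ 2) • (1 : Matrix (Fin t) (Fin t) ℝ)) (preT xs t) x
        ≤ postStd k ((lam ^ 2) • (1 : Matrix (Fin t) (Fin t) ℝ)) (preT xs t) (xs t))
    (γ : ℝ) (hγ0 : 0 ≤ γ)
    (hγ : ∀ Z : Fin T → 𝒳,
      infoGain k ((lam ^ 2) • (1 : Matrix (Fin T) (Fin T) ℝ)) Z ≤ γ)
    (hbig : (T : ℝ) / 2 ≥ 3 * γ)
    (y : Fin T → ℝ) (f : 𝒳 → ℝ)
    (hconf : ∀ x : 𝒳,
      |f x - postMean k ((lam ^ 2) • (1 : Matrix (Fin T) (Fin T) ℝ)) (preT xs T) y x|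
        ≤ sβ * postStd k ((lam ^ 2) • (1 : Matrix (Fin T) (Fin T) ℝ)) (preT xs T) x)
    (xhat : 𝒳)
    (hxhat : ∀ x : 𝒳,
      postMean k ((lam ^ 2) • (1 : Matrix (Fin T) (Fin T) ℝ)) (preT xs T) y x
        ≤ postMean k ((lam ^ 2) • (1 : Matrix (Fin T) (Fin T) ℝ)) (preT xs T) y xhat)
    (xstar : 𝒳) :
    f xstar - f xhat
      ≤ 8 * (Real.sqrt c + ρ * w) * Real.sqrt (γ / T) := by
  have hlam0 : 0 < lam := hlam ▸ div_pos (Real.sqrt_pos.mpr hc) hB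
  have hl : 0 < lam ^ 2 := by positivity
  have hstd : ∀ x, postStd k ((lam ^ 2) • (1 : Matrix (Fin T) (Fin T) ℝ)) (preT xs T) x ≤
      2 * lam * Real.sqrt (γ / T) := fun x => by
    have hvar := hk.postVar_preT_le_of_mvr xs hl hT
      (fun t ht x => (hk.postStd_le_postStd_iff _ hl _ _).mp (hMVR t ht x)) (hγ _) hbig x
    calc postStd k ((lam ^ 2) • 1) (preT xs T) x ≤ Real.sqrt ((2 * lam) ^ 2 * (γ / T)) :=
          Real.sqrt_le_sqrt (hvar.trans (by rw [mul_pow, mul_div_assoc']; gcongr; norm_num))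
      _ = 2 * lam * Real.sqrt (γ / T) := by
          rw [Real.sqrt_mul (by positivity), Real.sqrt_sq (by positivity)]
  have hsβ0 : 0 ≤ sβ := by rw [hsβ]; positivity
  have hbound : 0 ≤ (Real.sqrt c + ρ * w) * Real.sqrt (γ / T) := by positivity
  calc f xstar - f xhat ≤ 2 * sβ * (2 * lam * Real.sqrt (γ / T)) :=
        sub_le_two_mul_of_abs_sub_le hsβ0 hconf hstd hxhat xstar
    _ = 4 * (Real.sqrt c + ρ * w) * Real.sqrt (γ / T) := by rw [hsβ, hlam]; field_simp; ring
    _ ≤ 8 * (Real.sqrt c + ρ * w) * Real.sqrt (γ / T) := by linarith
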